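/- Let A ∈ ℝ^{m×n} and let M ∈ ℝ^{n×n} be symmetric positive definite. Then there exist a matrix U ∈ ℝ^{m×m} with Uᵀ U = I_m, a matrix V ∈ ℝ^{n×n} with Vᵀ M V = I_n, an integer r = rank(A), and real numbers σ₁ ≥ σ₂ ≥ … ≥ σ_r > 0 such that Uᵀ A V = Σ, where Σ ∈ ℝ^{m×n} is the matrix whose (i,i) entry equals σ_i for 1 ≤ i ≤ r and all of whose other entries are zero. -/

import Mathlib

open Matrix

/-- Euclidean norm of a vector. -/
noncomputable def euclNorm {m : ℕ} (x : Fin m → ℝ) : ℝ := Real.sqrt (x ⬝ᵥ x)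

/-- M-weighted norm of a vector: ‖x‖_M = (xᵀ M x)^{1/2}. -/
noncomputable def mnorm {n : ℕ} (M : Matrix (Fin n) (Fin n) ℝ) (x : Fin n → ℝ) : ℝ :=
  Real.sqrt (x ⬝ᵥ M.mulVec x)

/-- Weighted matrix norm ‖A‖_{M,2} = sup_{x ≠ 0} ‖Ax‖₂ / ‖x‖_M. -/
noncomputable def wnorm {m n : ℕ} (A : Matrix (Fin m) (Fin n) ℝ)
    (M : Matrix (Fin n) (Fin n) ℝ) : ℝ :=
  sSup {t : ℝ | ∃ x : Fin n → ℝ, x ≠ 0 ∧ t = euclNorm (A.mulVec x) / mnorm M x}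

/-- The m×n "diagonal" matrix with entries σ₁,…,σ_r on the leading diagonal and zeros elsewhere. -/
noncomputable def wsvdSigma (m n r : ℕ) (σ : Fin r → ℝ) : Matrix (Fin m) (Fin n) ℝ :=
  Matrix.of fun i j => if h : (i : ℕ) = (j : ℕ) ∧ (i : ℕ) < r then σ ⟨i, h.2⟩ else 0


lemma inner_eucl {m : ℕ} (x y : EuclideanSpace ℝ (Fin m)) :
    (inner ℝ x y : ℝ) = ∑ k, x k * y k := by
  simp [PiLp.inner_apply, RCLike.inner_apply, starRingEnd_apply, mul_comm]

lemma antitone_support {n : ℕ} (d : Fin n → ℝ) (hnn : ∀ i, 0 ≤ d i)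
    (hanti : ∀ i j : Fin n, i ≤ j → d j ≤ d i) (r : ℕ)
    (hcard : (Finset.univ.filter (fun j => d j ≠ 0)).card = r) (j : Fin n) :
    d j ≠ 0 ↔ (j : ℕ) < r := by
  constructor
  · intro h
    have hpos : 0 < d j := lt_of_le_of_ne (hnn j) (Ne.symm h)
    have hsub : Finset.Iic j ⊆ Finset.univ.filter (fun j => d j ≠ 0) := by
      intro i hi
      simp only [Finset.mem_Iic] at hi
      simp only [Finset.mem_filter, Finset.mem_univ, true_and]
      exact ne_of_gt (lt_of_lt_of_le hpos (hanti i j hi))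
    have := Finset.card_le_card hsub
    rw [hcard] at this
    simp at this
    omega
  · intro hj
    intro h0
    have hsub : Finset.univ.filter (fun j => d j ≠ 0) ⊆ Finset.Iio j := by
      intro i hi
      simp only [Finset.mem_filter, Finset.mem_univ, true_and] at hi
      simp only [Finset.mem_Iio]
      by_contra hij
      push_neg at hij
      exact hi (le_antisymm (h0 ▸ hanti j i hij) (hnn i))
    have := Finset.card_le_card hsub
    rw [hcard] at this
    simp at this
    omega

lemma real_svd {m n : ℕ} (B : Matrix (Fin m) (Fin n) ℝ) (r : ℕ) (hr : B.rank = r) :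
    ∃ (U : Matrix (Fin m) (Fin m) ℝ) (W : Matrix (Fin n) (Fin n) ℝ) (σ : Fin r → ℝ),
      Uᵀ * U = 1 ∧ Wᵀ * W = 1 ∧ (∀ i j : Fin r, i ≤ j → σ j ≤ σ i) ∧ (∀ i, 0 < σ i) ∧
      Uᵀ * B * W = wsvdSigma m n r σ := by
  classical
  have hrn : r ≤ n := hr ▸ B.rank_le_width
  have hrm : r ≤ m := hr ▸ B.rank_le_height
  set G : Matrix (Fin n) (Fin n) ℝ := Bᵀ * B with hGdef
  have hGpsd : G.PosSemidef := by
    simpa [Matrix.conjTranspose_eq_transpose_of_trivial] using Matrix.posSemidef_conjTranspose_mul_self B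
  have hG : G.IsHermitian := hGpsd.1
  set Q : Matrix (Fin n) (Fin n) ℝ := (hG.eigenvectorUnitary : Matrix (Fin n) (Fin n) ℝ)
    with hQdef
  have hQQ : Qᵀ * G * Q = diagonal hG.eigenvalues := by
    have h := hG.conjStarAlgAut_star_eigenvectorUnitary
    simpa [hQdef, Matrix.star_eq_conjTranspose, Matrix.conjTranspose_eq_transpose_of_trivial] using h
  set p : Equiv.Perm (Fin n) := Tuple.sort (fun i => -(hG.eigenvalues i)) with hpdef
  set d : Fin n → ℝ := fun i => hG.eigenvalues (p i) with hddef
  have hd_anti : ∀ i j : Fin n, i ≤ j → d j ≤ d i := by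
    intro i j hij
    have := Tuple.monotone_sort (fun i => -(hG.eigenvalues i)) hij
    simp only [Function.comp_apply] at this
    simpa [hddef] using neg_le_neg_iff.mp this
  have hd_nonneg : ∀ i, 0 ≤ d i := fun i => hGpsd.eigenvalues_nonneg (p i)
  set W : Matrix (Fin n) (Fin n) ℝ := Q.submatrix id ⇑p with hWdef
  have hWW : Wᵀ * W = 1 := by
    have hsq : Qᵀ * Q = 1 := by
      have h : star (hG.eigenvectorUnitary : Matrix (Fin n) (Fin n) ℝ) *
          (hG.eigenvectorUnitary : Matrix (Fin n) (Fin n) ℝ) = 1 := Unitary.coe_star_mul_self _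
      simpa [hQdef, Matrix.star_eq_conjTranspose, Matrix.conjTranspose_eq_transpose_of_trivial] using h
    have : Wᵀ * (1 : Matrix (Fin n) (Fin n) ℝ) * W = (Qᵀ * 1 * Q).submatrix ⇑p ⇑p := by
      rw [hWdef]; ext i j; simp [Matrix.mul_apply]
    simpa [hsq, Matrix.submatrix_one_equiv p] using this
  have hWGW : Wᵀ * G * W = diagonal d := by
    have h1 : Wᵀ * G * W = (Qᵀ * G * Q).submatrix ⇑p ⇑p := by
      rw [hWdef]; ext i j; simp [Matrix.mul_apply]
    rw [h1, hQQ, Matrix.submatrix_diagonal _ _ p.injective]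
    rfl
  set C : Matrix (Fin m) (Fin n) ℝ := B * W with hCdef
  have hCC : Cᵀ * C = diagonal d := by
    rw [hCdef, Matrix.transpose_mul]
    calc Wᵀ * Bᵀ * (B * W) = Wᵀ * (Bᵀ * B) * W := by
          rw [Matrix.mul_assoc, Matrix.mul_assoc, Matrix.mul_assoc]
      _ = diagonal d := hWGW
  -- columns of C
  set c : Fin n → (Fin m → ℝ) := fun j i => C i j with hcdef
  have hcc : ∀ j k : Fin n, c j ⬝ᵥ c k = if j = k then d j else 0 := by
    intro j k
    have : (Cᵀ * C) j k = diagonal d j k := by rw [hCC]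
    simpa [Matrix.mul_apply, Matrix.diagonal_apply, dotProduct, hcdef,
      mul_comm] using this
  -- rank computation
  have hdet_W : IsUnit W.det := by
    have h : W.det * W.det = 1 := by
      have := congrArg Matrix.det hWW
      rwa [Matrix.det_mul, Matrix.det_transpose, Matrix.det_one] at this
    exact IsUnit.of_mul_eq_one _ h
  have hcard : (Finset.univ.filter (fun j => d j ≠ 0)).card = r := by
    have h1 : (diagonal d).rank = C.rank := by rw [← hCC]; exact C.rank_transpose_mul_self
    have h2 : C.rank = B.rank := by
      rw [hCdef]; exact Matrix.rank_mul_eq_left_of_isUnit_det W B hdet_W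
    have h3 : (diagonal d).rank = Fintype.card {i // d i ≠ 0} := Matrix.rank_diagonal d
    have h4 : Fintype.card {i // d i ≠ 0} = (Finset.univ.filter (fun j => d j ≠ 0)).card :=
      Fintype.card_subtype _
    omega
  have hd_iff : ∀ j : Fin n, d j ≠ 0 ↔ (j : ℕ) < r :=
    antitone_support d hd_nonneg hd_anti r hcard
  -- singular values
  set σ : Fin r → ℝ := fun i => Real.sqrt (d (Fin.castLE hrn i)) with hσdef
  have hd_pos : ∀ i : Fin r, 0 < d (Fin.castLE hrn i) := by
    intro i
    exact lt_of_le_of_ne (hd_nonneg _)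
      (Ne.symm ((hd_iff _).mpr (by simpa using i.isLt)))
  have hσ_pos : ∀ i, 0 < σ i := fun i => Real.sqrt_pos.mpr (hd_pos i)
  have hσ_anti : ∀ i j : Fin r, i ≤ j → σ j ≤ σ i := by
    intro i j hij
    exact Real.sqrt_le_sqrt (hd_anti _ _ (by simpa using hij))
  have hσ_sq : ∀ i : Fin r, σ i * σ i = d (Fin.castLE hrn i) :=
    fun i => Real.mul_self_sqrt (hd_pos i).le
  -- orthonormal family
  set s : Set (Fin m) := {i | (i : ℕ) < r} with hsdef
  set v : Fin m → EuclideanSpace ℝ (Fin m) := fun i =>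
    if h : (i : ℕ) < r then (σ ⟨i, h⟩)⁻¹ • (WithLp.toLp 2 (c (Fin.castLE hrn ⟨i, h⟩))) else 0 with hvdef
  have hv_apply : ∀ (i : Fin m) (h : (i : ℕ) < r) (k : Fin m),
      v i k = (σ ⟨i, h⟩)⁻¹ * c (Fin.castLE hrn ⟨i, h⟩) k := by
    intro i h k
    simp [hvdef, h]
  have hv_on : Orthonormal ℝ (s.restrict v) := by
    rw [orthonormal_iff_ite]
    rintro ⟨i, hi⟩ ⟨j, hj⟩
    rw [inner_eucl]
    have hi' : (i : ℕ) < r := hi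
    have hj' : (j : ℕ) < r := hj
    simp only [Set.restrict_apply]
    have : ∑ k, v i k * v j k
        = (σ ⟨i, hi'⟩)⁻¹ * (σ ⟨j, hj'⟩)⁻¹ *
          (c (Fin.castLE hrn ⟨i, hi'⟩) ⬝ᵥ c (Fin.castLE hrn ⟨j, hj'⟩)) := by
      simp only [hv_apply _ hi', hv_apply _ hj', dotProduct, Finset.mul_sum]
      congr 1; ext k; ring
    change ∑ k, v i k * v j k = _
    rw [this, hcc]
    by_cases hij : i = j
    · subst hij
      have hσe : σ ⟨i, hj'⟩ = σ ⟨i, hi'⟩ := rfl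
      rw [if_pos rfl, if_pos rfl, hσe, ← hσ_sq ⟨i, hi'⟩]
      have hne := (hσ_pos ⟨i, hi'⟩).ne'
      field_simp
    · have h1 : Fin.castLE hrn ⟨i, hi'⟩ ≠ Fin.castLE hrn ⟨j, hj'⟩ := by
        intro h; apply hij
        have := congrArg (Fin.val) h
        simp at this
        exact Fin.ext this
      have h2 : (⟨i, hi⟩ : s) ≠ ⟨j, hj⟩ := by simp [hij]
      rw [if_neg h1, if_neg h2]
      ring
  obtain ⟨b, hb⟩ := hv_on.exists_orthonormalBasis_extension_of_card_eq
    (by simp [finrank_euclideanSpace])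
  set U : Matrix (Fin m) (Fin m) ℝ := Matrix.of (fun i j => b j i) with hUdef
  have hUU : Uᵀ * U = 1 := by
    ext i j
    have : (inner ℝ (b i) (b j) : ℝ) = if i = j then 1 else 0 :=
      orthonormal_iff_ite.mp b.orthonormal i j
    rw [inner_eucl] at this
    simp only [Matrix.mul_apply, Matrix.transpose_apply, hUdef, Matrix.of_apply,
      Matrix.one_apply]
    rw [this]
  refine ⟨U, W, σ, hUU, hWW, hσ_anti, hσ_pos, ?_⟩
  rw [Matrix.mul_assoc, ← hCdef]
  ext i j
  simp only [Matrix.mul_apply, Matrix.transpose_apply, hUdef, Matrix.of_apply, wsvdSigma]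
  by_cases hj : (j : ℕ) < r
  · set j' : Fin m := ⟨(j : ℕ), lt_of_lt_of_le hj hrm⟩ with hj'def
    have hj's : j' ∈ s := hj
    have hcastj : Fin.castLE hrn ⟨(j' : ℕ), hj⟩ = j := by
      apply Fin.ext; rfl
    have hCcol : ∀ k, C k j = σ ⟨(j : ℕ), hj⟩ * b j' k := by
      intro k
      have hv := hv_apply j' hj k
      rw [hb j' hj's, hv, hcastj]
      have hσne : σ ⟨(j : ℕ), hj⟩ ≠ 0 := (hσ_pos _).ne'
      rw [hcdef]
      field_simp
      rw [mul_div_assoc, show σ ⟨(j' : ℕ), hj⟩ = σ ⟨(j : ℕ), hj⟩ from rfl, div_self hσne, mul_one]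
    have horth : (inner ℝ (b i) (b j') : ℝ) = if i = j' then 1 else 0 :=
      orthonormal_iff_ite.mp b.orthonormal i j'
    rw [inner_eucl] at horth
    have : ∑ k, b i k * C k j = σ ⟨(j : ℕ), hj⟩ * ∑ k, b i k * b j' k := by
      rw [Finset.mul_sum]
      congr 1; ext k; rw [hCcol k]; ring
    rw [this, horth]
    by_cases hij : i = j'
    · have hij' : (i : ℕ) = (j : ℕ) := by rw [hij]
      rw [if_pos hij, dif_pos ⟨hij', hij' ▸ hj⟩]
      simp only [mul_one]
      congr 1
      exact Fin.ext hij'.symm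
    · have hij' : ¬((i : ℕ) = (j : ℕ) ∧ (i : ℕ) < r) := by
        rintro ⟨h1, _⟩
        exact hij (Fin.ext h1)
      rw [if_neg hij, dif_neg hij']
      ring
  · have hdj : d j = 0 := by
      by_contra h
      exact hj ((hd_iff j).mp h)
    have hcol : c j = 0 := by
      have := hcc j j
      rw [if_pos rfl, hdj] at this
      exact (dotProduct_self_eq_zero).mp this
    have hC0 : ∀ k, C k j = 0 := by
      intro k
      have := congrFun hcol k
      simpa [hcdef] using this
    have hcond : ¬((i : ℕ) = (j : ℕ) ∧ (i : ℕ) < r) := by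
      rintro ⟨h1, h2⟩
      exact hj (h1 ▸ h2)
    rw [dif_neg hcond]
    simp [hC0]

theorem stmt_1 {m n : ℕ} (A : Matrix (Fin m) (Fin n) ℝ) (M : Matrix (Fin n) (Fin n) ℝ)
    (hM : M.PosDef) :
    ∃ (U : Matrix (Fin m) (Fin m) ℝ) (V : Matrix (Fin n) (Fin n) ℝ)
      (σ : Fin A.rank → ℝ),
      Uᵀ * U = 1 ∧ Vᵀ * M * V = 1 ∧
      (∀ i j : Fin A.rank, i ≤ j → σ j ≤ σ i) ∧ (∀ i, 0 < σ i) ∧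
      Uᵀ * A * V = wsvdSigma m n A.rank σ := by
  classical
  open scoped MatrixOrder in
  set L : Matrix (Fin n) (Fin n) ℝ := CFC.sqrt M with hLdef
  open scoped MatrixOrder in
  have hLL : L * L = M := CFC.sqrt_mul_sqrt_self M hM.posSemidef.nonneg
  open scoped MatrixOrder in
  have hLsym : Lᵀ = L := by
    have h := (CFC.sqrt_nonneg M).posSemidef.1
    simpa [Matrix.IsHermitian, Matrix.conjTranspose_eq_transpose_of_trivial] using h
  have hLdet : IsUnit L.det := by
    rw [isUnit_iff_ne_zero]
    intro h
    have : M.det = 0 := by rw [← hLL, Matrix.det_mul, h, mul_zero]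
    exact hM.det_pos.ne' this
  have hLinvdet : IsUnit (L⁻¹).det := (Matrix.isUnit_nonsing_inv_det L hLdet)
  have hLinv : L * L⁻¹ = 1 := Matrix.mul_nonsing_inv L hLdet
  have hinvL : L⁻¹ * L = 1 := Matrix.nonsing_inv_mul L hLdet
  set B : Matrix (Fin m) (Fin n) ℝ := A * L⁻¹ with hBdef
  have hrank : B.rank = A.rank := Matrix.rank_mul_eq_left_of_isUnit_det L⁻¹ A hLinvdet
  obtain ⟨U, W, σ, hUU, hWW, hanti, hpos, hUBW⟩ := real_svd B A.rank hrank
  refine ⟨U, L⁻¹ * W, σ, hUU, ?_, hanti, hpos, ?_⟩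
  · have hinvsym : (L⁻¹)ᵀ = L⁻¹ := by
      rw [Matrix.transpose_nonsing_inv, hLsym]
    have key : L⁻¹ * M * L⁻¹ = 1 := by
      rw [← hLL, ← Matrix.mul_assoc, hinvL, Matrix.one_mul, hLinv]
    calc (L⁻¹ * W)ᵀ * M * (L⁻¹ * W)
        = Wᵀ * (L⁻¹ * M * L⁻¹) * W := by
          rw [Matrix.transpose_mul, hinvsym]
          simp only [Matrix.mul_assoc]
      _ = 1 := by rw [key, Matrix.mul_one, hWW]
  · calc Uᵀ * A * (L⁻¹ * W) = Uᵀ * (A * L⁻¹) * W := by simp only [Matrix.mul_assoc]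
      _ = wsvdSigma m n A.rank σ := hUBW
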